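/- arXiv:1703.05858 — 2 statements merged into one kernel-verified Lean document; each statement's English description precedes it below -/
import Mathlib

section
/- Let n ≥ 3, m ≥ 1, and let Γ be the connected component of (0,…,0) in the tensor product of m cycles each of length 2n. Then the stabilizer in Aut(Γ) of the vertex v = (0,…,0) has order at most 2^m · m!, and hence Aut(Γ) is generated by the automorphisms of the cycle factors together with permutations of the factors. -/
def cycleTensor (n m : ℕ) : SimpleGraph (Fin m → ZMod (2 * n)) where
  Adj x y := x ≠ y ∧ ∀ i, x i - y i = 1 ∨ x i - y i = -1
  symm := ⟨by
    rintro x y ⟨hne, hs⟩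
    refine ⟨hne.symm, fun i => ?_⟩
    rcases hs i with h | h
    · right
      have : y i - x i = -(x i - y i) := by ring
      rw [this, h]
    · left
      have : y i - x i = -(x i - y i) := by ring
      rw [this, h]; ring⟩
  loopless := ⟨fun x h => h.1 rfl⟩

noncomputable def cycleTensorComp (n m : ℕ) :
    SimpleGraph (((cycleTensor n m).connectedComponentMk 0).supp) :=
  SimpleGraph.induce (((cycleTensor n m).connectedComponentMk 0).supp) (cycleTensor n m)

/-!
The neighbours of a vertex `u` are the vertices `u + ε` with `ε ∈ {±1}^m`, and two of them,
`u + ε` and `u + δ`, have exactly `2 ^ (m - d(ε, δ))` common neighbours, where `d` is the Hamming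
distance (this is where `n ≥ 3`, i.e. `4 ≠ 0` in `ℤ/2nℤ`, enters). Hence every automorphism `φ`
induces an isometry of the Hamming cube `{±1}^m` on the neighbourhoods of `0` and `φ 0`; such an
isometry is a signed permutation of the coordinates, so `φ` agrees with a Cartesian automorphism
on `0` and its neighbours. Finally an automorphism is determined by its values on a vertex and
its neighbours: a vertex two steps away from `u` is determined by the neighbours of `u` it is
adjacent to, so agreement spreads along the edges of the connected component.
-/

section Signs

variable {R : Type*} [CommRing R]

def IsSign (a : R) : Prop := a = 1 ∨ a = -1

theorem isSign_neg_iff {a : R} : IsSign (-a) ↔ IsSign a := by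
  rw [IsSign, IsSign, neg_eq_iff_eq_neg, neg_inj, or_comm]

theorem IsSign.neg {a : R} (h : IsSign a) : IsSign (-a) := isSign_neg_iff.mpr h

theorem IsSign.mul_self {a : R} (h : IsSign a) : a * a = 1 := by
  rcases h with rfl | rfl <;> simp

theorem IsSign.isSign_mul_iff {s : R} (hs : IsSign s) {a : R} : IsSign (s * a) ↔ IsSign a := by
  rcases hs with rfl | rfl
  · rw [one_mul]
  · rw [neg_one_mul, isSign_neg_iff]

theorem IsSign.mul_left_injective {s : R} (hs : IsSign s) : Function.Injective (s * ·) :=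
  fun a b hab => by simpa [← mul_assoc, hs.mul_self] using congrArg (s * ·) hab

theorem IsSign.ne_zero [Nontrivial R] {a : R} (h : IsSign a) : a ≠ 0 := by
  rcases h with rfl | rfl <;> simp

theorem IsSign.eq_of_eq_neg_one_iff {a b : R} (ha : IsSign a) (hb : IsSign b)
    (h : a = -1 ↔ b = -1) : a = b := by
  rcases ha with rfl | rfl
  · rcases hb with rfl | rfl
    · rfl
    · exact h.mpr rfl
  · exact (h.mp rfl).symm

theorem two_ne_zero_of_four_ne_zero (h4 : (4 : R) ≠ 0) : (2 : R) ≠ 0 :=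
  left_ne_zero_of_mul (b := 2) (by norm_num [h4])

theorem one_ne_neg_one_of_two_ne_zero (h2 : (2 : R) ≠ 0) : (1 : R) ≠ -1 :=
  fun h => h2 (by linear_combination h)

theorem Nat.card_isSign (h2 : (2 : R) ≠ 0) : Nat.card {a : R // IsSign a} = 2 := by
  have : {a : R | IsSign a} = {1, -1} := rfl
  rw [← Set.coe_ofPred, this, Nat.card_coe_set_eq,
    Set.ncard_pair (one_ne_neg_one_of_two_ne_zero h2)]

theorem isSign_sub_and_isSign_add_iff (h4 : (4 : R) ≠ 0) {a d : R} (ha : IsSign a) :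
    IsSign (d - a) ∧ IsSign (d + a) ↔ d = 0 := by
  have h2 := two_ne_zero_of_four_ne_zero h4
  refine ⟨fun ⟨h₁, h₂⟩ => ?_, fun hd => by rcases ha with rfl | rfl <;> simp [hd, IsSign]⟩
  rcases ha with rfl | rfl <;> rcases h₁ with h₁ | h₁ <;> rcases h₂ with h₂ | h₂ <;> grind

theorem IsSign.eq_zero_of_isSign_add_of_isSign_sub (h4 : (4 : R) ≠ 0) {a p : R} (ha : IsSign a)
    (h₁ : IsSign (a + p)) (h₂ : IsSign (a - p)) : p = 0 :=
  (isSign_sub_and_isSign_add_iff h4 ha).mp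
    ⟨by rwa [← isSign_neg_iff, neg_sub], by rwa [add_comm]⟩

theorem Nat.card_isSign_sub_and_isSign_sub [DecidableEq R] (h4 : (4 : R) ≠ 0) {a b : R}
    (ha : IsSign a) (hb : IsSign b) :
    Nat.card {d : R // IsSign (d - a) ∧ IsSign (d - b)} = 2 ^ if a = b then 1 else 0 := by
  split_ifs with hab
  · subst hab
    simp_rw [and_self]
    rw [Nat.card_congr ((Equiv.subRight a).subtypeEquiv (p := fun d => IsSign (d - a)) (q := IsSign)
      fun _ => Iff.rfl), Nat.card_isSign (two_ne_zero_of_four_ne_zero h4), pow_one]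
  · obtain rfl : b = -a := by rcases ha with rfl | rfl <;> rcases hb with rfl | rfl <;> simp_all
    simp_rw [sub_neg_eq_add]
    rw [Nat.card_congr (Equiv.subtypeEquivRight fun _ => isSign_sub_and_isSign_add_iff h4 ha)]
    simp

def signAffineEquiv {s : R} (hs : IsSign s) (c : R) : R ≃ R where
  toFun a := s * a + c
  invFun a := s * (a - c)
  left_inv a := by simp [← mul_assoc, hs.mul_self]
  right_inv a := by simp [← mul_assoc, hs.mul_self]

theorem isSign_signAffineEquiv_sub_iff {s : R} (hs : IsSign s) (c a b : R) :
    IsSign (signAffineEquiv hs c a - signAffineEquiv hs c b) ↔ IsSign (a - b) := by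
  rw [show signAffineEquiv hs c a - signAffineEquiv hs c b = s * (a - b) by
    simp only [signAffineEquiv, Equiv.coe_fn_mk]; ring, hs.isSign_mul_iff]

end Signs

theorem hammingDist_update_right_add {ι α : Type*} [Fintype ι] [DecidableEq ι] [DecidableEq α]
    (x y : ι → α) (j : ι) (b : α) :
    hammingDist x (Function.update y j b) + (if x j ≠ y j then 1 else 0) =
      hammingDist x y + (if x j ≠ b then 1 else 0) := by
  simp only [hammingDist, Finset.card_filter, Fintype.sum_eq_add_sum_compl j,
    Function.update_self]
  rw [Finset.sum_congr rfl fun i hi => by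
    rw [Function.update_of_ne (Finset.mem_compl.mp hi ∘ Finset.mem_singleton.mpr)]]
  split_ifs <;> omega

section SignVectors

def signVectors (ι R : Type*) [CommRing R] : Submonoid (ι → R) where
  carrier := {ε | ∀ i, IsSign (ε i)}
  one_mem' _ := Or.inl rfl
  mul_mem' {ε δ} hε hδ i := by
    rcases hε i with h | h <;> simp only [Pi.mul_apply, h, one_mul, neg_one_mul]
    exacts [hδ i, (hδ i).neg]

variable {ι R : Type*} [CommRing R]

theorem Nat.card_signVectors [Fintype ι] (h2 : (2 : R) ≠ 0) :
    Nat.card (signVectors ι R) = 2 ^ Fintype.card ι := by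
  rw [Nat.card_congr (show signVectors ι R ≃ (ι → {a : R // IsSign a}) from
    Equiv.subtypePiEquivPi), Nat.card_pi,
    Finset.prod_congr rfl fun _ _ => Nat.card_isSign h2, Finset.prod_const, Finset.card_univ]

theorem Nat.card_isSign_sub_and_isSign_sub_pi [Fintype ι] [DecidableEq R] (h4 : (4 : R) ≠ 0)
    {ε δ : ι → R} (hε : ε ∈ signVectors ι R) (hδ : δ ∈ signVectors ι R) :
    Nat.card {x : ι → R // ∀ i, IsSign (x i - ε i) ∧ IsSign (x i - δ i)} =
      2 ^ (Fintype.card ι - hammingDist ε δ) := by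
  rw [Nat.card_congr (Equiv.subtypePiEquivPi (p := fun i d => IsSign (d - ε i) ∧ IsSign (d - δ i))),
    Nat.card_pi,
    Finset.prod_congr rfl fun i _ => Nat.card_isSign_sub_and_isSign_sub h4 (hε i) (hδ i),
    Finset.prod_pow_eq_pow_sum, Finset.sum_boole, Nat.cast_id]
  have := Finset.card_filter_add_card_filter_not (s := Finset.univ) (fun i => ε i = δ i)
  rw [Finset.card_univ] at this
  simp only [hammingDist, ne_eq]
  congr 1
  omega

theorem Pi.mulSingle_neg_one_mem_signVectors [DecidableEq ι] (j : ι) :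
    Pi.mulSingle j (-1 : R) ∈ signVectors ι R := fun i => by
  rcases eq_or_ne i j with rfl | hij
  · exact Or.inr (Pi.mulSingle_eq_same i _)
  · exact Or.inl (Pi.mulSingle_eq_of_ne hij _)

variable [Fintype ι] [DecidableEq ι] [DecidableEq R]

theorem eq_neg_one_iff_hammingDist_lt (h2 : (2 : R) ≠ 0) {ε : ι → R}
    (hε : ε ∈ signVectors ι R) (j : ι) :
    ε j = -1 ↔ hammingDist ε (Pi.mulSingle j (-1)) < hammingDist ε 1 := by
  have h := hammingDist_update_right_add ε 1 j (-1)
  have h1 := one_ne_neg_one_of_two_ne_zero h2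
  rw [← Pi.mulSingle] at h
  rcases hε j with hj | hj <;> simp [hj, h1, h1.symm] at h ⊢ <;> omega

theorem hammingDist_mulSingle_neg_one_one (h2 : (2 : R) ≠ 0) (j : ι) :
    hammingDist (Pi.mulSingle j (-1) : ι → R) 1 = 1 := by
  have h := hammingDist_update_right_add (Pi.mulSingle j (-1 : R)) 1 j (-1)
  rw [← Pi.mulSingle, hammingDist_self] at h
  simpa [(one_ne_neg_one_of_two_ne_zero h2).symm] using h.symm

theorem exists_eq_mulSingle_of_hammingDist_one_eq_one (h2 : (2 : R) ≠ 0)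
    {ε : ι → R} (hε : ε ∈ signVectors ι R) (h : hammingDist ε 1 = 1) :
    ∃ j, ε = Pi.mulSingle j (-1) := by
  obtain ⟨j, hj⟩ := Function.ne_iff.mp (hammingDist_ne_zero.mp (h ▸ one_ne_zero))
  have hj : ε j = -1 := (hε j).resolve_left hj
  rw [eq_neg_one_iff_hammingDist_lt h2 hε, h, hammingDist_lt_one] at hj
  exact ⟨j, hj⟩

theorem exists_perm_of_hammingDist_eq_of_map_one (h2 : (2 : R) ≠ 0)
    (g : signVectors ι R → signVectors ι R)
    (hg : ∀ ε δ, hammingDist (g ε : ι → R) (g δ) = hammingDist (ε : ι → R) δ) (h1 : g 1 = 1) :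
    ∃ σ : Equiv.Perm ι, ∀ ε, (g ε : ι → R) = ε ∘ σ := by
  let e (j : ι) : signVectors ι R := ⟨Pi.mulSingle j (-1), Pi.mulSingle_neg_one_mem_signVectors j⟩
  have hg1 : ((g 1 : signVectors ι R) : ι → R) = 1 := by rw [h1]; rfl
  have hd1 (ε) : hammingDist (g ε : ι → R) 1 = hammingDist (ε : ι → R) 1 := by
    simpa [hg1] using hg ε 1
  have he (j : ι) : ∃ k, (g (e j) : ι → R) = Pi.mulSingle k (-1) :=
    exists_eq_mulSingle_of_hammingDist_one_eq_one h2 (g (e j)).2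
      (by rw [hd1]; exact hammingDist_mulSingle_neg_one_one h2 j)
  choose τ hτ using he
  -- `g` permutes the `e j`, and the coordinates of a sign vector are read off from its distances
  -- to `1` and to the `e j`
  have hτinj : Function.Injective τ := fun j j' hjj' => by
    have : (e j : ι → R) = e j' := by
      rw [← hammingDist_eq_zero, ← hg, hτ, hτ, hjj', hammingDist_self]
    by_contra hne
    have := congrFun this j
    simp [e, Pi.mulSingle_eq_of_ne hne, (one_ne_neg_one_of_two_ne_zero h2).symm] at this
  let σ := (Equiv.ofBijective τ (Finite.injective_iff_bijective.mp hτinj)).symm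
  have hσ (j : ι) : σ (τ j) = j := (Equiv.ofBijective τ _).symm_apply_apply j
  refine ⟨σ, fun ε => funext fun i => ?_⟩
  obtain ⟨j, rfl⟩ := Finite.surjective_of_injective hτinj i
  rw [Function.comp_apply, hσ]
  refine ((g ε).2 (τ j)).eq_of_eq_neg_one_iff (ε.2 j) ?_
  rw [eq_neg_one_iff_hammingDist_lt h2 (g ε).2, eq_neg_one_iff_hammingDist_lt h2 ε.2, ← hτ, hg,
    hd1]

theorem exists_perm_of_hammingDist_eq (h2 : (2 : R) ≠ 0)
    (g : signVectors ι R → signVectors ι R)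
    (hg : ∀ ε δ, hammingDist (g ε : ι → R) (g δ) = hammingDist (ε : ι → R) δ) :
    ∃ σ : Equiv.Perm ι, ∀ ε, (g ε : ι → R) = g 1 * ((ε : ι → R) ∘ σ) := by
  have hsq (ε : signVectors ι R) : ε * ε = 1 := Subtype.ext (funext fun i => (ε.2 i).mul_self)
  obtain ⟨σ, hσ⟩ := exists_perm_of_hammingDist_eq_of_map_one h2 (fun ε => g 1 * g ε)
    (fun ε δ => (hammingDist_comp (fun i a => (g 1 : ι → R) i * a)
      (fun i => ((g 1).2 i).mul_left_injective)).trans (hg ε δ)) (hsq _)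
  refine ⟨σ, fun ε => ?_⟩
  rw [← hσ, Submonoid.coe_mul, ← mul_assoc, ← Submonoid.coe_mul, hsq, Submonoid.coe_one, one_mul]

end SignVectors

namespace SimpleGraph

variable {V : Type*} {G : SimpleGraph V}

theorem Connected.iso_ext_of_eqOn_neighbors (hG : G.Connected)
    (hdet : ∀ ⦃u w z z' : V⦄, G.Adj u w → G.Adj w z → G.Adj w z' →
      (∀ y, G.Adj u y → (G.Adj z y ↔ G.Adj z' y)) → z = z')
    {φ ψ : G ≃g G} {u : V} (hu : φ u = ψ u) (hN : ∀ z, G.Adj u z → φ z = ψ z) : φ = ψ := by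
  let P (v : V) : Prop := φ v = ψ v ∧ ∀ z, G.Adj v z → φ z = ψ z
  have step {v w : V} (hv : P v) (hvw : G.Adj v w) : P w := by
    refine ⟨hv.2 w hvw, fun z hwz => ?_⟩
    have hwz' : G.Adj w (ψ.symm (φ z)) := by
      rw [← ψ.map_adj_iff, ψ.apply_symm_apply, ← hv.2 w hvw, φ.map_adj_iff]
      exact hwz
    have key := hdet hvw hwz hwz' fun y hvy => by
      rw [← φ.map_adj_iff, hv.2 y hvy, ← ψ.symm.map_adj_iff, ψ.symm_apply_apply]
    rw [key, ψ.apply_symm_apply, ← key]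
  have walk {v w : V} (p : G.Walk v w) (hv : P v) : P w := by
    induction p with
    | nil => exact hv
    | cons h _ ih => exact ih (step hv h)
  exact RelIso.ext fun x => (walk (hG.preconnected u x).some ⟨hu, hN⟩).1

theorem ConnectedComponent.card_commonNeighbors_induce_supp (C : G.ConnectedComponent)
    (v w : C.supp) :
    Nat.card ((G.induce C.supp).commonNeighbors v w) = Nat.card (G.commonNeighbors v w) := by
  have : Subtype.val '' (G.induce C.supp).commonNeighbors v w = G.commonNeighbors v w := by
    ext z
    simp only [Set.mem_image, mem_commonNeighbors, comap_adj, Function.Embedding.coe_subtype]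
    exact ⟨fun ⟨y, hy, hyz⟩ => hyz ▸ hy,
      fun hz => ⟨⟨z, C.mem_supp_of_adj_mem_supp v.2 hz.1⟩, hz, rfl⟩⟩
  rw [← this, Nat.card_image_of_injective Subtype.val_injective]

theorem Iso.bijOn_supp_connectedComponentMk (Φ : G ≃g G) {v : V} (hv : G.Reachable (Φ v) v) :
    Set.BijOn Φ (G.connectedComponentMk v).supp (G.connectedComponentMk v).supp := by
  have hv' : G.Reachable (Φ.symm v) v := by
    simpa using (Iso.reachable_iff (φ := Φ.symm)).mpr hv.symm
  refine Equiv.bijOn' (e := Φ.toEquiv) (fun x hx => ?_) (fun x hx => ?_)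
  all_goals
    simp only [ConnectedComponent.mem_supp_iff, ConnectedComponent.eq] at hx ⊢
  · exact (Iso.reachable_iff.mpr hx).trans hv
  · exact ((Iso.reachable_iff (φ := Φ.symm)).mpr hx).trans hv'

theorem Iso.card_commonNeighbors {W : Type*} {G' : SimpleGraph W} (φ : G ≃g G') (v w : V) :
    Nat.card (G'.commonNeighbors (φ v) (φ w)) = Nat.card (G.commonNeighbors v w) :=
  Nat.card_congr (φ.toEquiv.subtypeEquiv fun _ => by
    simp only [mem_commonNeighbors]; exact (and_congr φ.map_adj_iff φ.map_adj_iff).symm).symm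

end SimpleGraph

section CycleTensor

open SimpleGraph

variable {n m : ℕ}

theorem four_ne_zero_zmod (hn : 3 ≤ n) : (4 : ZMod (2 * n)) ≠ 0 := by
  rw [show (4 : ZMod (2 * n)) = ((4 : ℕ) : ZMod (2 * n)) by norm_cast, ne_eq,
    ZMod.natCast_eq_zero_iff]
  exact Nat.not_dvd_of_pos_of_lt (by norm_num) (by omega)

theorem cycleTensor_adj_iff (hn : 0 < n) (hm : 1 ≤ m) {x y : Fin m → ZMod (2 * n)} :
    (cycleTensor n m).Adj x y ↔ ∀ i, IsSign (x i - y i) := by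
  refine ⟨fun h => h.2, fun h => ⟨fun hxy => ?_, h⟩⟩
  have : Fact (1 < 2 * n) := ⟨by omega⟩
  exact (h ⟨0, hm⟩).ne_zero (by rw [hxy, sub_self])

def cartesianEquiv {ι R : Type*} (σ : Equiv.Perm ι) (ρ : ι → R ≃ R) : (ι → R) ≃ (ι → R) where
  toFun x i := ρ i (x (σ i))
  invFun y j := (ρ (σ.symm j)).symm (y (σ.symm j))
  left_inv x := funext fun j => by simp
  right_inv y := funext fun i => by simp

def cartesianIso (σ : Equiv.Perm (Fin m)) (ρ : Fin m → ZMod (2 * n) ≃ ZMod (2 * n))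
    (hρ : ∀ i a b, IsSign (a - b) ↔ IsSign (ρ i a - ρ i b)) :
    cycleTensor n m ≃g cycleTensor n m where
  toEquiv := cartesianEquiv σ ρ
  map_rel_iff' {x y} := by
    refine and_congr (cartesianEquiv σ ρ).injective.ne_iff ?_
    exact (forall_congr' fun i => (hρ i _ _).symm).trans
      (σ.forall_congr_right (q := fun i => IsSign (x i - y i)))

theorem card_commonNeighbors_cycleTensor (hn : 3 ≤ n) (hm : 1 ≤ m) {u v w : Fin m → ZMod (2 * n)}
    (hv : (cycleTensor n m).Adj u v) (hw : (cycleTensor n m).Adj u w) :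
    Nat.card ((cycleTensor n m).commonNeighbors v w) = 2 ^ (m - hammingDist (v - u) (w - u)) := by
  have hn' : 0 < n := by omega
  have hsign {x : Fin m → ZMod (2 * n)} (hx : (cycleTensor n m).Adj u x) :
      x - u ∈ signVectors (Fin m) (ZMod (2 * n)) := fun i => by
    simpa using ((cycleTensor_adj_iff hn' hm).mp hx.symm) i
  have hcount :=
    Nat.card_isSign_sub_and_isSign_sub_pi (four_ne_zero_zmod hn) (hsign hv) (hsign hw)
  rw [Fintype.card_fin] at hcount
  rw [← hcount]
  refine Nat.card_congr ((Equiv.subRight u).subtypeEquiv fun z => ?_)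
  simp only [mem_commonNeighbors, adj_comm _ _ z, cycleTensor_adj_iff hn' hm, Equiv.subRight_apply,
    Pi.sub_apply, sub_sub_sub_cancel_right, forall_and]

namespace cycleTensorComp

abbrev origin (n m : ℕ) : ((cycleTensor n m).connectedComponentMk 0).supp := ⟨0, rfl⟩

theorem connected : (cycleTensorComp n m).Connected :=
  ConnectedComponent.connected_toSimpleGraph _

theorem adj_iff (hn : 0 < n) (hm : 1 ≤ m) {x y : ((cycleTensor n m).connectedComponentMk 0).supp} :
    (cycleTensorComp n m).Adj x y ↔ ∀ i, IsSign (x.1 i - y.1 i) :=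
  cycleTensor_adj_iff hn hm

theorem card_commonNeighbors (hn : 3 ≤ n) (hm : 1 ≤ m)
    {u v w : ((cycleTensor n m).connectedComponentMk 0).supp}
    (hv : (cycleTensorComp n m).Adj u v) (hw : (cycleTensorComp n m).Adj u w) :
    Nat.card ((cycleTensorComp n m).commonNeighbors v w) =
      2 ^ (m - hammingDist (v.1 - u.1) (w.1 - u.1)) :=
  (ConnectedComponent.card_commonNeighbors_induce_supp _ v w).trans
    (card_commonNeighbors_cycleTensor hn hm hv hw)

theorem hammingDist_map_sub (hn : 3 ≤ n) (hm : 1 ≤ m)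
    (φ : cycleTensorComp n m ≃g cycleTensorComp n m)
    {u v w : ((cycleTensor n m).connectedComponentMk 0).supp}
    (hv : (cycleTensorComp n m).Adj u v) (hw : (cycleTensorComp n m).Adj u w) :
    hammingDist ((φ v).1 - (φ u).1) ((φ w).1 - (φ u).1) = hammingDist (v.1 - u.1) (w.1 - u.1) := by
  have h := φ.card_commonNeighbors v w
  rw [card_commonNeighbors hn hm (φ.map_adj_iff.mpr hv) (φ.map_adj_iff.mpr hw),
    card_commonNeighbors hn hm hv hw] at h
  have h₁ := hammingDist_le_card_fintype (x := (φ v).1 - (φ u).1) (y := (φ w).1 - (φ u).1)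
  have h₂ := hammingDist_le_card_fintype (x := v.1 - u.1) (y := w.1 - u.1)
  rw [Fintype.card_fin] at h₁ h₂
  have := Nat.pow_right_injective le_rfl h
  omega

theorem eq_of_forall_adj_iff (hn : 3 ≤ n) (hm : 1 ≤ m)
    {u w z z' : ((cycleTensor n m).connectedComponentMk 0).supp}
    (huw : (cycleTensorComp n m).Adj u w) (hwz : (cycleTensorComp n m).Adj w z)
    (hwz' : (cycleTensorComp n m).Adj w z')
    (h : ∀ y, (cycleTensorComp n m).Adj u y →
      ((cycleTensorComp n m).Adj z y ↔ (cycleTensorComp n m).Adj z' y)) : z = z' := by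
  have hn' : 0 < n := by omega
  rw [adj_iff hn' hm] at huw
  have key {z z' : ((cycleTensor n m).connectedComponentMk 0).supp}
      (hwz' : (cycleTensorComp n m).Adj w z')
      (h : ∀ y, (cycleTensorComp n m).Adj u y → (cycleTensorComp n m).Adj z' y →
        (cycleTensorComp n m).Adj z y) (i : Fin m) :
      IsSign (u.1 i - w.1 i + (z'.1 i - z.1 i)) := by
    rw [adj_iff hn' hm] at hwz'
    -- `u - w + z'` is a neighbour of `u` and of `z'`, hence of `z`
    have hy : (cycleTensor n m).Adj u.1 (u.1 - w.1 + z'.1) :=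
      (cycleTensor_adj_iff hn' hm).mpr fun i => by
        convert hwz' i using 1; simp only [Pi.add_apply, Pi.sub_apply]; ring
    let y : ((cycleTensor n m).connectedComponentMk 0).supp :=
      ⟨u.1 - w.1 + z'.1, ConnectedComponent.mem_supp_of_adj_mem_supp _ u.2 hy⟩
    have hzy := h y hy ((adj_iff hn' hm).mpr fun i => by simpa [y] using (huw i).neg)
    rw [← isSign_neg_iff]
    convert (adj_iff hn' hm).mp hzy i using 1
    simp only [y, Pi.add_apply, Pi.sub_apply]
    ring
  refine Subtype.ext (funext fun i => ?_)
  have := (huw i).eq_zero_of_isSign_add_of_isSign_sub (four_ne_zero_zmod hn)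
    (key hwz' (fun y hy => (h y hy).mpr) i)
    (by simpa [sub_eq_add_neg] using key hwz (fun y hy => (h y hy).mp) i)
  linear_combination -this

theorem exists_perm_forall_adj_origin_apply_eq (hn : 3 ≤ n) (hm : 1 ≤ m)
    (φ : cycleTensorComp n m ≃g cycleTensorComp n m) :
    ∃ σ : Equiv.Perm (Fin m), ∃ s ∈ signVectors (Fin m) (ZMod (2 * n)),
      ∀ x, (cycleTensorComp n m).Adj (origin n m) x →
        (φ x).1 = s * (x.1 ∘ σ) + (φ (origin n m)).1 := by
  have hn' : 0 < n := by omega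
  have hadj₀ (ε : signVectors (Fin m) (ZMod (2 * n))) : (cycleTensor n m).Adj 0 ε :=
    (cycleTensor_adj_iff hn' hm).mpr fun i => by simpa using (ε.2 i).neg
  let vtx (ε : signVectors (Fin m) (ZMod (2 * n))) :
      ((cycleTensor n m).connectedComponentMk 0).supp :=
    ⟨ε, ConnectedComponent.mem_supp_of_adj_mem_supp _ (origin n m).2 (hadj₀ ε)⟩
  have hadj (ε) : (cycleTensorComp n m).Adj (origin n m) (vtx ε) := hadj₀ ε
  have hsign (ε) : (φ (vtx ε)).1 - (φ (origin n m)).1 ∈ signVectors (Fin m) (ZMod (2 * n)) :=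
    (adj_iff hn' hm).mp (φ.map_adj_iff.mpr (hadj ε)).symm
  obtain ⟨σ, hσ⟩ := exists_perm_of_hammingDist_eq
    (two_ne_zero_of_four_ne_zero (four_ne_zero_zmod hn)) (fun ε => ⟨_, hsign ε⟩)
    fun ε δ => by simpa using hammingDist_map_sub hn hm φ (hadj ε) (hadj δ)
  refine ⟨σ, _, hsign 1, fun x hx => ?_⟩
  have hx' : x.1 ∈ signVectors (Fin m) (ZMod (2 * n)) := fun i => by
    simpa using ((adj_iff hn' hm).mp hx i).neg
  rw [← hσ ⟨x.1, hx'⟩, sub_add_cancel]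

theorem exists_perm_forall_apply_eq (hn : 3 ≤ n) (hm : 1 ≤ m)
    (φ : cycleTensorComp n m ≃g cycleTensorComp n m) :
    ∃ σ : Equiv.Perm (Fin m), ∃ s ∈ signVectors (Fin m) (ZMod (2 * n)),
      ∀ x, (φ x).1 = s * (x.1 ∘ σ) + (φ (origin n m)).1 := by
  obtain ⟨σ, s, hs, hφ⟩ := exists_perm_forall_adj_origin_apply_eq hn hm φ
  set c := (φ (origin n m)).1
  let Φ := cartesianIso σ (fun i => signAffineEquiv (hs i) (c i))
    fun i a b => (isSign_signAffineEquiv_sub_iff (hs i) (c i) a b).symm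
  have hΦ (x) : Φ x = s * (x ∘ σ) + c := rfl
  have hc : (cycleTensor n m).Reachable (Φ 0) 0 := by
    simpa [hΦ] using ConnectedComponent.exact (φ (origin n m)).2
  let Ψ : cycleTensorComp n m ≃g cycleTensorComp n m :=
    Φ.induce (Φ.bijOn_supp_connectedComponentMk hc)
  have : φ = Ψ := connected.iso_ext_of_eqOn_neighbors
    (fun _ _ _ _ => eq_of_forall_adj_iff hn hm) (u := origin n m)
    (Subtype.ext (show c = Φ 0 by simp [hΦ])) fun x hx => Subtype.ext ((hφ x hx).trans (hΦ x).symm)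
  exact ⟨σ, s, hs, fun x => by rw [this]; rfl⟩

end cycleTensorComp

end CycleTensor

/-- Let `n ≥ 3`, `m ≥ 1`, and let `Γ` be the connected component of
`(0,…,0)` in the tensor product of `m` cycles of length `2n`.  Then the stabilizer
in `Aut(Γ)` of the vertex `v = (0,…,0)` has order at most `2^m · m!`, and hence
every automorphism of `Γ` is of Cartesian type: it is induced by automorphisms of
the cycle factors together with a permutation of the factors. -/
theorem cycle_tensor_component_aut (n m : ℕ) (hn : 3 ≤ n) (hm : 1 ≤ m) :
    Nat.card {φ : (cycleTensorComp n m) ≃g (cycleTensorComp n m) //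
        φ ⟨0, (SimpleGraph.ConnectedComponent.mem_supp_iff _ _).mpr rfl⟩ =
          ⟨0, (SimpleGraph.ConnectedComponent.mem_supp_iff _ _).mpr rfl⟩} ≤
      2 ^ m * Nat.factorial m ∧
    ∀ φ : (cycleTensorComp n m) ≃g (cycleTensorComp n m),
      ∃ (σ : Equiv.Perm (Fin m)) (ρ : Fin m → (ZMod (2 * n) ≃ ZMod (2 * n))),
        (∀ i (a b : ZMod (2 * n)),
          (a - b = 1 ∨ a - b = -1) ↔ (ρ i a - ρ i b = 1 ∨ ρ i a - ρ i b = -1)) ∧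
        ∀ x : ((cycleTensor n m).connectedComponentMk 0).supp,
          (φ x : Fin m → ZMod (2 * n)) =
            fun i => ρ i ((x : Fin m → ZMod (2 * n)) (σ i)) := by
  choose σ s hs hφ using cycleTensorComp.exists_perm_forall_apply_eq hn hm
  let o := cycleTensorComp.origin n m
  refine ⟨?_, fun φ => ⟨σ φ, fun i => signAffineEquiv (hs φ i) ((φ o).1 i),
    fun i a b => (isSign_signAffineEquiv_sub_iff _ _ a b).symm, hφ φ⟩⟩
  have : NeZero (2 * n) := ⟨by omega⟩
  have hinj : Function.Injective fun φ : {φ // φ o = o} =>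
      (σ φ.1, (⟨s φ.1, hs φ.1⟩ : signVectors (Fin m) (ZMod (2 * n)))) := by
    rintro ⟨φ, hφo⟩ ⟨ψ, hψo⟩ h
    simp only [Prod.mk.injEq, Subtype.mk.injEq] at h
    refine Subtype.ext (RelIso.ext fun x => Subtype.ext ?_)
    change (φ x).1 = (ψ x).1
    rw [hφ φ x, hφ ψ x, hφo, hψo, h.1, h.2]
  calc _ ≤ Nat.card (Equiv.Perm (Fin m) × signVectors (Fin m) (ZMod (2 * n))) :=
        Nat.card_le_card_of_injective _ hinj
    _ = 2 ^ m * m.factorial := by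
      rw [Nat.card_prod, Nat.card_perm,
        Nat.card_signVectors (two_ne_zero_of_four_ne_zero (four_ne_zero_zmod hn)), Nat.card_fin,
        Fintype.card_fin, mul_comm]
end

section
/- The tensor product of two non-bipartite simple graphs is non-bipartite, and the tensor product of finitely many simple graphs each containing an odd cycle is connected and non-bipartite, provided each factor is connected with at least two vertices. -/
/-
An odd closed walk can be lengthened by any even amount by going back and forth along an edge,
so a non-bipartite graph has closed walks of every large odd length at a fixed vertex, and a
connected non-bipartite graph joins any two vertices by walks of every large even length
(an odd `u`–`v` walk becomes even after a detour around an odd closed walk). Walks of a common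
length in every factor run in parallel to a walk of the tensor product. Choosing a common large
odd, respectively even, length yields an odd closed walk in the product, respectively a walk
between any two of its vertices.
-/

/-- The tensor (direct) product of two simple graphs. -/
def SimpleGraph.directProd {α β : Type} (G : SimpleGraph α) (H : SimpleGraph β) :
    SimpleGraph (α × β) where
  Adj a b := G.Adj a.1 b.1 ∧ H.Adj a.2 b.2
  symm := ⟨fun _ _ h => ⟨G.adj_symm h.1, H.adj_symm h.2⟩⟩
  loopless := ⟨fun a h => G.irrefl h.1⟩

/-- The tensor (direct) product of a finite family of simple graphs: two distinct
vertices are adjacent iff they are adjacent in every coordinate.  (For a nonempty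
index family this agrees with the iterated binary tensor product.) -/
def familyTensor {k : ℕ} {α : Fin k → Type} (G : ∀ i, SimpleGraph (α i)) :
    SimpleGraph (∀ i, α i) where
  Adj x y := x ≠ y ∧ ∀ i, (G i).Adj (x i) (y i)
  symm := ⟨fun _ _ h => ⟨h.1.symm, fun i => (G i).adj_symm (h.2 i)⟩⟩
  loopless := ⟨fun _ h => h.1 rfl⟩

open Filter

namespace SimpleGraph

variable {V : Type*} {G : SimpleGraph V}

lemma not_colorable_two_iff_exists_odd_loop :
    ¬ G.Colorable 2 ↔ ∃ (u : V) (w : G.Walk u u), Odd w.length := by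
  simp [two_colorable_iff_forall_loop_even]

lemma exists_walk_length_eq_of_adj_succ {u v : V} (f : ℕ → V) {n : ℕ} (h0 : f 0 = u)
    (hn : f n = v) (h : ∀ t < n, G.Adj (f t) (f (t + 1))) : ∃ w : G.Walk u v, w.length = n := by
  subst h0 hn
  induction n with
  | zero => exact ⟨.nil, rfl⟩
  | succ n ih =>
    obtain ⟨w, hw⟩ := ih fun t ht => h t (by omega)
    exact ⟨w.concat (h n n.lt_succ_self), by simp [hw]⟩

namespace Walk

lemma exists_length_eq_add_two_mul {u v z : V} (hz : G.Adj u z) (p : G.Walk u v) (m : ℕ) :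
    ∃ q : G.Walk u v, q.length = p.length + 2 * m := by
  induction m with
  | zero => exact ⟨p, rfl⟩
  | succ m ih =>
    obtain ⟨q, hq⟩ := ih
    exact ⟨.cons hz (.cons hz.symm q), by simp [hq]; ring⟩

lemma eventually_exists_length_eq {u v z : V} (hz : G.Adj u z) (p : G.Walk u v) :
    ∀ᶠ L in atTop, (Even L ↔ Even p.length) → ∃ q : G.Walk u v, q.length = L := by
  filter_upwards [eventually_ge_atTop p.length] with L hL hpar
  obtain ⟨q, hq⟩ := p.exists_length_eq_add_two_mul hz ((L - p.length) / 2)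
  refine ⟨q, ?_⟩
  simp only [Nat.even_iff] at hpar
  omega

end Walk

lemma eventually_exists_odd_loop (h : ¬ G.Colorable 2) :
    ∃ c : V, ∀ᶠ L in atTop, Odd L → ∃ w : G.Walk c c, w.length = L := by
  obtain ⟨c, p, hp⟩ := not_colorable_two_iff_exists_odd_loop.1 h
  have hz := p.adj_snd (mt Walk.length_eq_zero_iff.2 hp.pos.ne')
  refine ⟨c, ?_⟩
  filter_upwards [p.eventually_exists_length_eq hz] with L hL hodd
  exact hL (by simp only [← Nat.not_odd_iff_even, hodd, hp])

lemma not_colorable_two_of_eventually_exists_odd_loop {c : V}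
    (h : ∀ᶠ L in atTop, Odd L → ∃ w : G.Walk c c, w.length = L) : ¬ G.Colorable 2 := by
  obtain ⟨L, hodd, hL⟩ := (Nat.frequently_odd.and_eventually h).exists
  obtain ⟨w, rfl⟩ := hL hodd
  exact not_colorable_two_iff_exists_odd_loop.2 ⟨c, w, hodd⟩

lemma Preconnected.exists_walk_even_length (hG : G.Preconnected) (h : ¬ G.Colorable 2)
    (u v : V) : ∃ w : G.Walk u v, Even w.length := by
  obtain ⟨p⟩ := hG u v
  rcases Nat.even_or_odd p.length with hp | hp
  · exact ⟨p, hp⟩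
  obtain ⟨c, loop, hloop⟩ := not_colorable_two_iff_exists_odd_loop.1 h
  obtain ⟨q⟩ := hG u c
  refine ⟨(q.append (loop.append q.reverse)).append p, ?_⟩
  simp only [Walk.length_append, Walk.length_reverse]
  grind

lemma Preconnected.eventually_exists_walk_even [Nontrivial V] (hG : G.Preconnected)
    (h : ¬ G.Colorable 2) (u v : V) :
    ∀ᶠ L in atTop, Even L → ∃ w : G.Walk u v, w.length = L := by
  obtain ⟨z, hz⟩ := hG.exists_adj_of_nontrivial u
  obtain ⟨p, hp⟩ := hG.exists_walk_even_length h u v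
  filter_upwards [p.eventually_exists_length_eq hz] with L hL heven
  exact hL (iff_of_true heven hp)

lemma reachable_of_eventually_exists_walk_even {u v : V}
    (h : ∀ᶠ L in atTop, Even L → ∃ w : G.Walk u v, w.length = L) : G.Reachable u v := by
  obtain ⟨L, heven, hL⟩ := (Nat.frequently_even.and_eventually h).exists
  obtain ⟨w, -⟩ := hL heven
  exact ⟨w⟩

section directProd

variable {α β : Type} {G : SimpleGraph α} {H : SimpleGraph β}

lemma directProd_exists_walk {a a' : α} {b b' : β} (p : G.Walk a a') (q : H.Walk b b')
    (hpq : p.length = q.length) :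
    ∃ w : (G.directProd H).Walk (a, b) (a', b'), w.length = p.length := by
  refine exists_walk_length_eq_of_adj_succ (fun t => (p.getVert t, q.getVert t))
    (by simp) (by rw [p.getVert_length, hpq, q.getVert_length]) fun t ht => ?_
  exact ⟨p.adj_getVert_succ ht, q.adj_getVert_succ (hpq ▸ ht)⟩

lemma directProd_eventually_exists_walk {P : ℕ → Prop} {a a' : α} {b b' : β}
    (hG : ∀ᶠ L in atTop, P L → ∃ p : G.Walk a a', p.length = L)
    (hH : ∀ᶠ L in atTop, P L → ∃ q : H.Walk b b', q.length = L) :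
    ∀ᶠ L in atTop, P L → ∃ w : (G.directProd H).Walk (a, b) (a', b'), w.length = L := by
  filter_upwards [hG, hH] with L hp hq hP
  obtain ⟨p, rfl⟩ := hp hP
  obtain ⟨q, hq⟩ := hq hP
  exact directProd_exists_walk p q hq.symm

end directProd

section familyTensor

variable {k : ℕ} [NeZero k] {α : Fin k → Type} {G : ∀ i, SimpleGraph (α i)}

lemma familyTensor_exists_walk {x y : ∀ i, α i} {n : ℕ}
    (h : ∀ i, ∃ w : (G i).Walk (x i) (y i), w.length = n) :
    ∃ w : (familyTensor G).Walk x y, w.length = n := by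
  choose w hw using h
  refine exists_walk_length_eq_of_adj_succ (fun t i => (w i).getVert t)
    (funext fun i => (w i).getVert_zero)
    (funext fun i => (w i).getVert_of_length_le (hw i).le) fun t ht => ?_
  have hadj i : (G i).Adj ((w i).getVert t) ((w i).getVert (t + 1)) :=
    (w i).adj_getVert_succ (hw i ▸ ht)
  exact ⟨fun he => (G 0).ne_of_adj (hadj 0) (congrFun he 0), hadj⟩

lemma familyTensor_eventually_exists_walk {P : ℕ → Prop} {x y : ∀ i, α i}
    (h : ∀ i, ∀ᶠ L in atTop, P L → ∃ w : (G i).Walk (x i) (y i), w.length = L) :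
    ∀ᶠ L in atTop, P L → ∃ w : (familyTensor G).Walk x y, w.length = L := by
  filter_upwards [eventually_all.2 h] with L hL hP
  exact familyTensor_exists_walk fun i => hL i hP

end familyTensor

end SimpleGraph

open SimpleGraph

/-- The tensor product of two non-bipartite simple graphs is
non-bipartite; and the tensor product of finitely many simple graphs, each
connected with at least two vertices and containing an odd cycle (i.e.
non-bipartite), is connected and non-bipartite. -/
theorem tensor_nonbipartite_connected :
    (∀ {α β : Type} (G : SimpleGraph α) (H : SimpleGraph β),
      ¬ G.Colorable 2 → ¬ H.Colorable 2 → ¬ (G.directProd H).Colorable 2) ∧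
    (∀ (k : ℕ) (α : Fin k → Type) (G : ∀ i, SimpleGraph (α i)), 1 ≤ k →
      (∀ i, (G i).Connected) → (∀ i, Nontrivial (α i)) →
      (∀ i, ¬ (G i).Colorable 2) →
      (familyTensor G).Connected ∧ ¬ (familyTensor G).Colorable 2) := by
  refine ⟨fun G H hG hH => ?_, fun k α G hk hconn hnt hbip => ?_⟩
  · obtain ⟨a, ha⟩ := eventually_exists_odd_loop hG
    obtain ⟨b, hb⟩ := eventually_exists_odd_loop hH
    exact not_colorable_two_of_eventually_exists_odd_loop (directProd_eventually_exists_walk ha hb)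
  · have : NeZero k := ⟨by omega⟩
    choose c hc using fun i => eventually_exists_odd_loop (hbip i)
    have : Nonempty (∀ i, α i) := ⟨c⟩
    refine ⟨⟨fun x y => reachable_of_eventually_exists_walk_even ?_⟩,
      not_colorable_two_of_eventually_exists_odd_loop (familyTensor_eventually_exists_walk hc)⟩
    refine familyTensor_eventually_exists_walk fun i => ?_
    have := hnt i
    exact (hconn i).preconnected.eventually_exists_walk_even (hbip i) (x i) (y i)
end
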